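/- Let 1 < n < ω. Every ω-resolvable topological space (X, T) admits an expansion U ⊇ T such that (X, U) is exactly n-resolvable. -/

import Mathlib

open Set TopologicalSpace

variable {X : Type*}

/-- The family `D : ι → Set X` witnesses `ι`-resolvability of the subspace `S` of `(X, T)`:
the `D i` are pairwise disjoint nonempty subsets of `S`, each dense in the subspace `S`
(equivalently `S ⊆ closure (D i)`). -/
def ResolvableFam (T : TopologicalSpace X) (S : Set X) (ι : Type*) : Prop :=
  ∃ D : ι → Set X, (∀ i, D i ⊆ S) ∧ (∀ i, (D i).Nonempty) ∧
    (∀ i, S ⊆ @closure X T (D i)) ∧ (Pairwise fun i j => Disjoint (D i) (D j))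

/-- A topology is quasi-regular if every nonempty open set contains the closure
of some nonempty open set. -/
def QuasiRegular (T : TopologicalSpace X) : Prop :=
  ∀ U : Set X, T.IsOpen U → U.Nonempty →
    ∃ V : Set X, T.IsOpen V ∧ V.Nonempty ∧ @closure X T V ⊆ U

/-!
Keep `n` of the disjoint dense sets, `D 0, …, D (n-1)`. By Zorn's lemma `T` has a finest expansion
`U` in which all of them stay dense, so `U` is `n`-resolvable, and in `U` every set `S` with
`S ⊆ closure (S ∩ D i)` for all `i` is open. For a set `E` which is dense with dense complement,
let `B E` be the union of the interiors of `(D i)ᶜ ∪ E` (`traceInterior D E`); openness of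
`Eᶜ ∪ B E` forces `B E` to be dense. Given `n + 1` disjoint dense sets `E j`, a point of the dense
open set `⋂ j, B (E j)` lies in `interior ((D (f j))ᶜ ∪ E j)` for some `f j`, and two such interiors with the
same `i` are disjoint because their intersection is open with trace `∅` on the dense set `D i`.
So `f : Fin (n + 1) → Fin n` is injective, which is absurd.
-/

open Filter Topology OrderDual Function

theorem resolvableFam_univ_iff {T : TopologicalSpace X} {ι : Type*} :
    ResolvableFam T univ ι ↔ ∃ D : ι → Set X,
      (∀ i, (D i).Nonempty) ∧ (∀ i, @Dense X T (D i)) ∧ Pairwise (Disjoint on D) := by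
  simp only [ResolvableFam, subset_univ, implies_true, true_and, univ_subset_iff,
    dense_iff_closure_eq]

theorem dense_iInf_of_directed {κ : Type*} [Nonempty κ] {t : κ → TopologicalSpace X}
    (ht : Directed (· ≥ ·) t) {s : Set X} (hs : ∀ k, @Dense X (t k) s) :
    @Dense X (⨅ k, t k) s := by
  intro x
  rw [@mem_closure_iff_clusterPt X (⨅ k, t k)]
  show (@nhds X (⨅ k, t k) x ⊓ 𝓟 s).NeBot
  rw [nhds_iInf, iInf_inf]
  have hx := fun k => (@mem_closure_iff_clusterPt X (t k)).1 (hs k x)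
  exact iInf_neBot_of_directed'
    (ht.mono_comp (g := fun t' => @nhds X t' x ⊓ 𝓟 s) _ fun _ _ h =>
      inf_le_inf_right _ (nhds_mono h))
    hx

theorem nhds_generateFrom_singleton_of_mem {S : Set X} {x : X} (hx : x ∈ S) :
    @nhds X (generateFrom {S}) x = 𝓟 S := by
  rw [nhds_generateFrom, show {s | x ∈ s ∧ s ∈ ({S} : Set (Set X))} = {S} by aesop,
    iInf_singleton]

theorem nhds_generateFrom_singleton_of_notMem {S : Set X} {x : X} (hx : x ∉ S) :
    @nhds X (generateFrom {S}) x = ⊤ := by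
  rw [nhds_generateFrom, show {s | x ∈ s ∧ s ∈ ({S} : Set (Set X))} = ∅ by aesop,
    iInf_emptyset]

theorem dense_inf_generateFrom_singleton {t : TopologicalSpace X} {s S : Set X}
    (hs : @Dense X t s) (hS : S ⊆ closure[t] (S ∩ s)) :
    @Dense X (t ⊓ generateFrom {S}) s := by
  intro x
  rw [@mem_closure_iff_clusterPt X (t ⊓ generateFrom {S})]
  show (@nhds X (t ⊓ generateFrom {S}) x ⊓ 𝓟 s).NeBot
  rw [nhds_inf]
  by_cases hx : x ∈ S
  · have hxS := (@mem_closure_iff_clusterPt X t).1 (hS hx)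
    rwa [nhds_generateFrom_singleton_of_mem hx, inf_assoc, inf_principal]
  · rw [nhds_generateFrom_singleton_of_notMem hx, inf_top_eq]
    exact (@mem_closure_iff_clusterPt X t).1 (hs x)

variable {ι : Type*}

/-- By `dense_inf_generateFrom_singleton`, the second field holds in a finest topology in which
every `D i` is dense. -/
structure IsMaximalDense [TopologicalSpace X] (D : ι → Set X) : Prop where
  dense : ∀ i, Dense (D i)
  isOpen_of_subset_closure_inter : ∀ S, (∀ i, S ⊆ closure (S ∩ D i)) → IsOpen S

theorem exists_le_isMaximalDense (t₀ : TopologicalSpace X) {D : ι → Set X}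
    (hD : ∀ i, @Dense X t₀ (D i)) : ∃ t ≤ t₀, @IsMaximalDense X ι t D := by
  let P : Set (TopologicalSpace X) := {t | t ≤ t₀ ∧ ∀ i, @Dense X t (D i)}
  obtain ⟨m, ⟨hmt₀, hmD⟩, hmin⟩ : ∃ m, Minimal (· ∈ P) m := by
    refine zorn_le₀ (α := (TopologicalSpace X)ᵒᵈ) P fun c hcP hc => ?_
    rcases c.eq_empty_or_nonempty with rfl | hne
    · exact ⟨t₀, ⟨le_rfl, hD⟩, by simp⟩
    · have : Nonempty c := hne.to_subtype
      have hdir : Directed (· ≥ ·) fun t : c => ofDual t.1 := hc.directed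
      refine ⟨toDual (⨅ t : c, ofDual t.1), ⟨?_, fun i => dense_iInf_of_directed hdir
        fun t => (hcP t.2).2 i⟩, fun t ht => iInf_le (fun t : c => ofDual t.1) ⟨t, ht⟩⟩
      obtain ⟨t, ht⟩ := hne
      exact (iInf_le (fun t : c => ofDual t.1) ⟨t, ht⟩).trans (hcP ht).1
  refine ⟨m, hmt₀, hmD, fun S hS => ?_⟩
  have hmS : m ⊓ generateFrom {S} ∈ P :=
    ⟨inf_le_left.trans hmt₀, fun i => dense_inf_generateFrom_singleton (hmD i) (hS i)⟩
  exact TopologicalSpace.le_def.1 ((hmin hmS inf_le_left).trans inf_le_right) S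
    (isOpen_generateFrom_of_mem (mem_singleton S))

section
variable [TopologicalSpace X]

theorem Dense.disjoint_interior_compl_union {s E E' : Set X} (hs : Dense s)
    (hE : Disjoint E E') : Disjoint (interior (sᶜ ∪ E)) (interior (sᶜ ∪ E')) := by
  rw [disjoint_iff_inter_eq_empty, ← interior_inter, ← union_inter_distrib_left, hE.inter_eq,
    union_empty, hs.interior_compl]

/-- The points having a neighbourhood whose trace on some `D i` lies in `E`. -/
def traceInterior (D : ι → Set X) (E : Set X) : Set X := ⋃ i, interior ((D i)ᶜ ∪ E)

variable {D : ι → Set X}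

theorem isOpen_traceInterior (E : Set X) : IsOpen (traceInterior D E) :=
  isOpen_iUnion fun _ => isOpen_interior

theorem dense_compl_union_traceInterior_inter (hD : ∀ i, Dense (D i)) (E : Set X) (i : ι) :
    Dense ((Eᶜ ∪ traceInterior D E) ∩ D i) := by
  refine dense_iff_inter_open.2 fun W hW ⟨x, hxW⟩ => ?_
  by_cases hWB : (W ∩ traceInterior D E).Nonempty
  · obtain ⟨y, ⟨hyW, hyB⟩, hyD⟩ :=
      (hD i).inter_open_nonempty _ (hW.inter (isOpen_traceInterior E)) hWB
    exact ⟨y, hyW, Or.inr hyB, hyD⟩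
  · have hWsub : ¬ W ⊆ (D i)ᶜ ∪ E := fun hsub =>
      hWB ⟨x, hxW, mem_iUnion.2 ⟨i, interior_maximal hsub hW hxW⟩⟩
    obtain ⟨y, hyW, hy⟩ := not_subset.1 hWsub
    simp only [mem_union, mem_compl_iff, not_or, not_not] at hy
    exact ⟨y, hyW, Or.inl hy.2, hy.1⟩

theorem IsMaximalDense.dense_traceInterior (h : IsMaximalDense D) {E : Set X}
    (hE : Dense E) (hEc : Dense Eᶜ) : Dense (traceInterior D E) := by
  have hS : IsOpen (Eᶜ ∪ traceInterior D E) := h.isOpen_of_subset_closure_inter _ fun i => by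
    rw [(dense_compl_union_traceInterior_inter h.dense E i).closure_eq]
    exact subset_univ _
  refine (hEc.mono ?_).of_closure
  calc Eᶜ ⊆ Eᶜ ∪ traceInterior D E := subset_union_left
    _ ⊆ closure ((Eᶜ ∪ traceInterior D E) ∩ E) := hE.open_subset_closure_inter hS
    _ ⊆ closure (traceInterior D E) :=
      closure_mono fun y ⟨hy, hyE⟩ => hy.resolve_left (not_not.2 hyE)

theorem IsMaximalDense.exists_injective [Nonempty X] {κ : Type*} [Finite κ] [Nontrivial κ]
    (h : IsMaximalDense D) {E : κ → Set X} (hE : ∀ j, Dense (E j))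
    (hdisj : Pairwise (Disjoint on E)) : ∃ f : κ → ι, Injective f := by
  have hEc : ∀ j, Dense (E j)ᶜ := fun j => by
    obtain ⟨k, hk⟩ := exists_ne j
    exact (hE k).mono (hdisj hk).subset_compl_right
  have hB : Dense (⋂ j, traceInterior D (E j)) := by
    rw [← sInter_range]
    exact (finite_range _).dense_sInter (forall_mem_range.2 fun j => isOpen_traceInterior _)
      (forall_mem_range.2 fun j => h.dense_traceInterior (hE j) (hEc j))
  obtain ⟨x, hx⟩ := hB.nonempty
  choose f hf using fun j => mem_iUnion.1 (mem_iInter.1 hx j)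
  refine ⟨f, fun j k hjk => by_contra fun hne => ?_⟩
  exact ((h.dense (f j)).disjoint_interior_compl_union (hdisj hne)).ne_of_mem (hf j)
    (hjk ▸ hf k) rfl

end

theorem stmt8 [T : TopologicalSpace X] (n : ℕ) (hn : 1 < n)
    (hres : ResolvableFam T (univ : Set X) ℕ) :
    ∃ U : TopologicalSpace X, (∀ s, T.IsOpen s → U.IsOpen s) ∧
      ResolvableFam U (univ : Set X) (Fin n) ∧
      ¬ ResolvableFam U (univ : Set X) (Fin (n + 1)) := by
  obtain ⟨D, hDne, hD, hDdisj⟩ := resolvableFam_univ_iff.1 hres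
  have : Nonempty X := ⟨(hDne 0).some⟩
  obtain ⟨U, hUT, hU⟩ := exists_le_isMaximalDense T (D := fun i : Fin n => D i) fun i => hD i
  refine ⟨U, TopologicalSpace.le_def.1 hUT, resolvableFam_univ_iff.2
    ⟨_, fun i => hDne i, hU.dense, hDdisj.comp_of_injective Fin.val_injective⟩, fun hres' => ?_⟩
  obtain ⟨E, -, hE, hEdisj⟩ := resolvableFam_univ_iff.1 hres'
  have : Nontrivial (Fin (n + 1)) := Fin.nontrivial_iff_two_le.2 (by omega)
  obtain ⟨f, hf⟩ := letI := U; hU.exists_injective hE hEdisj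
  simpa using Fintype.card_le_of_injective f hf
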